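/- Let m, n be positive integers. If the quadratic polynomial X^2 - m*n*X + (m + n) has a positive integer root, then there exist positive integers a, b with a + b = m*n and a*b = m + n, and necessarily a, b, m, n ∈ {1, 2, 3, 5}. -/

import Mathlib

/-! Writing the root as `a` and the other root as `b = m n - a`, Vieta gives `a + b = m n` and
`a b = m + n`, a system symmetric in `(a, b) ↔ (m, n)`. Expanding,
`(m - 1)(n - 1) + (a - 1)(b - 1) = 2`, so either `n = 1`, forcing `{a, b} = {2, 3}` and `m = 5`,
or `m - 1 ≤ 2`. By the symmetries the same holds for `n`, `a` and `b`. -/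

theorem exists_add_eq_mul_eq_of_sq_sub_mul_add_eq_zero {x s p : ℕ} (hp : 0 < p)
    (hroot : (x : ℤ) ^ 2 - s * x + p = 0) : ∃ b : ℕ, 0 < b ∧ x + b = s ∧ x * b = p := by
  have hprod : (x : ℤ) * (s - x) = p := by linear_combination -hroot
  have hpos : (0 : ℤ) < s - x :=
    pos_of_mul_pos_right (hprod ▸ Int.natCast_pos.mpr hp) (Int.natCast_nonneg x)
  have hle : x ≤ s := by omega
  refine ⟨s - x, by omega, by omega, ?_⟩
  have hcast : ((x * (s - x) : ℕ) : ℤ) = p := by push_cast [hle]; exact hprod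
  exact_mod_cast hcast

theorem sub_one_mul_sub_one_add_sub_one_mul_sub_one_eq_two {a b m n : ℤ} (hsum : a + b = m * n)
    (hprod : a * b = m + n) : (m - 1) * (n - 1) + (a - 1) * (b - 1) = 2 := by
  linear_combination hprod - hsum

theorem mem_of_add_eq_mul_of_mul_eq_add {a b m n : ℕ} (ha : 0 < a) (hb : 0 < b)
    (hsum : a + b = m * n) (hprod : a * b = m + n) : m ∈ ({1, 2, 3, 5} : Set ℕ) := by
  have hm : 0 < m := Nat.pos_of_ne_zero fun h => by simp [h] at hsum; omega
  have hn : 0 < n := Nat.pos_of_ne_zero fun h => by simp [h] at hsum; omega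
  have key := sub_one_mul_sub_one_add_sub_one_mul_sub_one_eq_two (a := (a : ℤ)) (b := b)
    (m := m) (n := n) (by exact_mod_cast hsum) (by exact_mod_cast hprod)
  rcases (show n = 1 ∨ 2 ≤ n by omega) with rfl | hn2
  · have hab : ((a : ℤ) - 1) * (b - 1) = 2 := by simpa using key
    have ha3 : (a : ℤ) - 1 ≤ 2 := Int.le_of_dvd two_pos ⟨_, hab.symm⟩
    have hb3 : (b : ℤ) - 1 ≤ 2 := Int.le_of_dvd two_pos (Dvd.intro_left _ hab)
    have : a ≤ 3 := by omega
    have : b ≤ 3 := by omega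
    interval_cases a <;> interval_cases b <;> simp_all
  · have : m ≤ 3 := by nlinarith
    interval_cases m <;> simp

theorem stmt10 (m n : ℕ) (hm : 0 < m) (hn : 0 < n)
    (h : ∃ x : ℕ, 0 < x ∧ (x : ℤ) ^ 2 - (m : ℤ) * n * x + ((m : ℤ) + n) = 0) :
    ∃ a b : ℕ, 0 < a ∧ 0 < b ∧ a + b = m * n ∧ a * b = m + n ∧
      a ∈ ({1, 2, 3, 5} : Set ℕ) ∧ b ∈ ({1, 2, 3, 5} : Set ℕ) ∧
      m ∈ ({1, 2, 3, 5} : Set ℕ) ∧ n ∈ ({1, 2, 3, 5} : Set ℕ) := by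
  obtain ⟨a, ha, hroot⟩ := h
  obtain ⟨b, hb, hsum, hprod⟩ := exists_add_eq_mul_eq_of_sq_sub_mul_add_eq_zero
    (s := m * n) (p := m + n) (by omega) (by exact_mod_cast hroot)
  refine ⟨a, b, ha, hb, hsum, hprod, ?_, ?_, ?_, ?_⟩
  · exact mem_of_add_eq_mul_of_mul_eq_add hm hn hprod.symm hsum.symm
  · exact mem_of_add_eq_mul_of_mul_eq_add hn hm (by rw [add_comm, ← hprod, mul_comm])
      (by rw [mul_comm, ← hsum, add_comm])
  · exact mem_of_add_eq_mul_of_mul_eq_add ha hb hsum hprod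
  · exact mem_of_add_eq_mul_of_mul_eq_add hb ha (by rw [add_comm, hsum, mul_comm])
      (by rw [mul_comm, hprod, add_comm])
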